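/- arXiv:1706.06082 — 4 statements merged into one kernel-verified Lean document; each statement's English description precedes it below -/
import Mathlib

section
/- Define the equivalence relation ∼ on irrational numbers by: x ∼ y iff there exist i, j ∈ ℕ such that the i-th complete quotient of x equals the j-th complete quotient of y (equivalently, the tails of their continued fraction expansions eventually coincide). Then for every irrational x, one has -x ∼ x. -/
noncomputable def cq (x : ℝ) : ℕ → ℝ
  | 0 => x
  | n + 1 => 1 / (cq x n - ⌊cq x n⌋)

def CFEquiv (x y : ℝ) : Prop := ∃ i j : ℕ, cq x i = cq y j

/-!
With `t = fract x`, the first complete quotients of `-x` and `x` are `u = 1/(1 - t)` and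
`s = 1/t`, so `1/u + 1/s = 1`. Since `t ≠ 1/2`, one of them, say `u`, lies in `(1, 2)`; then
`1/(u - 1) = s - 1`, i.e. one more step from `u` reaches `s` up to an integer shift, and the
next complete quotients agree.
-/

open Int

@[simp]
lemma cq_zero (x : ℝ) : cq x 0 = x := rfl

@[simp]
lemma cq_succ (x : ℝ) (n : ℕ) : cq x (n + 1) = (fract (cq x n))⁻¹ := by
  rw [fract, ← one_div]; rfl

lemma inv_fract_inv_fract_eq_inv_fract {u s : ℝ} (hu : 0 < u) (hs : 0 < s) (hu2 : u < 2)
    (h : u⁻¹ + s⁻¹ = 1) : (fract (fract u)⁻¹)⁻¹ = (fract s)⁻¹ := by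
  have hu1 : 1 < u := by
    rw [← inv_lt_one₀ hu]; linarith [inv_pos.2 hs]
  have hfract_u : fract u = u - 1 := by
    rw [fract, (floor_eq_iff (z := 1)).2 ⟨by push_cast; linarith, by push_cast; linarith⟩]
    simp
  have hinv : (u - 1)⁻¹ = s - 1 := by
    field_simp at h
    exact (eq_inv_of_mul_eq_one_left (by linear_combination -h)).symm
  rw [hfract_u, hinv, fract_sub_one]

lemma Irrational.fract_ne_half {x : ℝ} (hx : Irrational x) : fract x ≠ 1 / 2 := fun h =>
  hx ⟨⌊x⌋ + 1 / 2, by push_cast; linarith [floor_add_fract x]⟩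

theorem neg_cfEquiv (x : ℝ) (hx : Irrational x) : CFEquiv (-x) x := by
  set t := fract x with ht
  have ht0 : t ≠ 0 := fract_ne_zero_iff.2 fun ⟨n, hn⟩ => hx.ne_int n hn.symm
  have htpos : 0 < t := (fract_nonneg x).lt_of_ne' ht0
  have ht1 : t < 1 := fract_lt_one x
  have hsum : (1 - t)⁻¹⁻¹ + t⁻¹⁻¹ = 1 := by simp
  rcases (hx.fract_ne_half).lt_or_gt with hlt | hgt
  · refine ⟨3, 2, ?_⟩
    simp only [cq_succ, cq_zero, fract_neg ht0, ← ht]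
    refine inv_fract_inv_fract_eq_inv_fract (by simp [ht1]) (by positivity) ?_ hsum
    rw [inv_lt_comm₀ (by linarith) two_pos]; linarith
  · refine ⟨2, 3, ?_⟩
    simp only [cq_succ, cq_zero, fract_neg ht0, ← ht]
    refine (inv_fract_inv_fract_eq_inv_fract (by positivity) (by simp [ht1]) ?_
      (by rw [add_comm, hsum])).symm
    rw [inv_lt_comm₀ htpos two_pos]; linarith
end

section
/- For every irrational x ≠ 0, one has 1/x ∼ x, where ∼ is the relation 'having a common complete quotient' on continued fraction expansions. -/
lemma cq_add (x : ℝ) (i j : ℕ) : cq x (i + j) = cq (cq x i) j := by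
  induction j with
  | zero => rfl
  | succ n ih => rw [← add_assoc, cq, cq, ih]

lemma cq_one (x : ℝ) : cq x 1 = 1 / Int.fract x := by
  rw [cq, cq, Int.self_sub_floor]

namespace CFEquiv

lemma refl (x : ℝ) : CFEquiv x x := ⟨0, 0, rfl⟩

lemma symm {x y : ℝ} (h : CFEquiv x y) : CFEquiv y x := by
  obtain ⟨i, j, h⟩ := h
  exact ⟨j, i, h.symm⟩

lemma trans {x y z : ℝ} (hxy : CFEquiv x y) (hyz : CFEquiv y z) : CFEquiv x z := by
  obtain ⟨i, j, hxy⟩ := hxy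
  obtain ⟨j', k, hyz⟩ := hyz
  rcases le_total j j' with h | h
  · exact ⟨i + (j' - j), k, by rw [cq_add, hxy, ← cq_add, Nat.add_sub_cancel' h, hyz]⟩
  · exact ⟨i, k + (j - j'), by rw [cq_add, ← hyz, ← cq_add, Nat.add_sub_cancel' h, hxy]⟩

end CFEquiv

lemma cfEquiv_cq (x : ℝ) (n : ℕ) : CFEquiv x (cq x n) := ⟨n, 0, rfl⟩

lemma cfEquiv_add_intCast (x : ℝ) (k : ℤ) : CFEquiv (x + k) x :=
  ⟨1, 1, by rw [cq_one, cq_one, Int.fract_add_intCast]⟩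

lemma cq_one_of_nonneg_of_lt_one {y : ℝ} (h0 : 0 ≤ y) (h1 : y < 1) : cq y 1 = 1 / y := by
  rw [cq_one, Int.fract_eq_self.2 ⟨h0, h1⟩]

lemma cfEquiv_one_div_of_nonneg {y : ℝ} (hy : 0 ≤ y) : CFEquiv (1 / y) y := by
  rcases lt_or_ge y 1 with hy1 | hy1
  · exact ⟨0, 1, (cq_one_of_nonneg_of_lt_one hy hy1).symm⟩
  · have hinv : 1 / y ≤ 1 := div_le_one_of_le₀ hy1 hy
    rcases hinv.lt_or_eq with hinv | hinv
    · refine ⟨1, 0, ?_⟩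
      rw [cq_one_of_nonneg_of_lt_one (by positivity) hinv, one_div_one_div]
      rfl
    · rw [hinv, show y = 1 by simpa using hinv]
      exact CFEquiv.refl 1

lemma cfEquiv_one_div_one_sub_of_lt_half {f : ℝ} (h0 : 0 < f) (h1 : f < 1 / 2) :
    CFEquiv (1 / (1 - f)) (1 / f) := by
  have hf1 : 0 < 1 - f := by linarith
  have hfract : Int.fract (1 / (1 - f)) = f / (1 - f) := by
    refine Int.fract_eq_iff.2 ⟨by positivity, ?_, 1, ?_⟩
    · rw [div_lt_one hf1]; linarith
    · field_simp; push_cast; ring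
  have hcq : cq (1 / (1 - f)) 1 = 1 / f + ((-1 : ℤ) : ℝ) := by
    rw [cq_one, hfract]
    field_simp
    push_cast
    ring
  exact (hcq ▸ cfEquiv_cq _ 1).trans (cfEquiv_add_intCast _ _)

lemma cfEquiv_one_div_one_sub {f : ℝ} (h0 : 0 < f) (h1 : f < 1) (hf : f ≠ 1 / 2) :
    CFEquiv (1 / (1 - f)) (1 / f) := by
  rcases hf.lt_or_gt with hf | hf
  · exact cfEquiv_one_div_one_sub_of_lt_half h0 hf
  · have h := cfEquiv_one_div_one_sub_of_lt_half (f := 1 - f) (by linarith) (by linarith)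
    rw [sub_sub_cancel] at h
    exact h.symm

lemma cfEquiv_neg {x : ℝ} (hx : Irrational x) : CFEquiv (-x) x := by
  have hf : Irrational (Int.fract x) := by
    simpa only [Int.self_sub_floor] using hx.sub_intCast ⌊x⌋
  have hf0 : Int.fract x ≠ 0 := by simpa using hf.ne_rat 0
  have hf2 : Int.fract x ≠ 1 / 2 := by simpa using hf.ne_rat (1 / 2)
  have hneg : cq (-x) 1 = 1 / (1 - Int.fract x) := by rw [cq_one, Int.fract_neg hf0]
  have hpos := (Int.fract_nonneg x).lt_of_ne' hf0
  exact (hneg ▸ cfEquiv_cq (-x) 1).trans <|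
    (cfEquiv_one_div_one_sub hpos (Int.fract_lt_one x) hf2).trans (cq_one x ▸ cfEquiv_cq x 1).symm

theorem inv_cfEquiv_general (x : ℝ) (hx : Irrational x) : CFEquiv (1 / x) x := by
  rcases le_or_gt 0 x with hnonneg | hneg
  · exact cfEquiv_one_div_of_nonneg hnonneg
  · have h := cfEquiv_one_div_of_nonneg (neg_nonneg.2 hneg.le)
    rw [one_div_neg_eq_neg_one_div] at h
    exact (cfEquiv_neg (one_div x ▸ hx.inv)).symm.trans (h.trans (cfEquiv_neg hx))

theorem inv_cfEquiv (x : ℝ) (hx : Irrational x) (hx0 : x ≠ 0) : CFEquiv (1 / x) x :=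
  inv_cfEquiv_general x hx
end

section
/- Suppose x is irrational, c > 0, ad - bc = ±1, and a/c = [a₀, ..., a_{n-1}] is a continued fraction expansion of a/c with n of the parity such that ad - bc = (-1)ⁿ. Then there exists an integer r such that (ax + b)/(cx + d) = [a₀, ..., a_{n-1}, x + r], i.e., the homographic image equals the finite continued fraction with tail x + r. -/
/-!
With `M = ∏ !![aᵢ, 1; 1, 0] = !![P, P'; Q, Q']`, the value `[a₀, …, a_{n-1}, t]` is the Möbius
transform `(P t + P') / (Q t + Q')`, `det M = (-1)ⁿ`, and `a / c = P / Q`. Both fractions are in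
lowest terms with positive denominators, so `(P, Q) = (a, c)`. Two integer matrices with the same
coprime first column and the same determinant differ by a right factor `!![1, r; 0, 1]`, which acts
as the translation `t ↦ t + r`.
-/

noncomputable def cfVal : List ℤ → ℝ
  | [] => 0
  | [a] => (a : ℝ)
  | a :: l => (a : ℝ) + 1 / cfVal l

noncomputable def cfValT : List ℤ → ℝ → ℝ
  | [], t => t
  | a :: l, t => (a : ℝ) + 1 / cfValT l t

open Matrix

def cfMatrix : List ℤ → Matrix (Fin 2) (Fin 2) ℤ
  | [] => 1
  | a :: l => !![a, 1; 1, 0] * cfMatrix l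

@[simp]
lemma cfMatrix_nil : cfMatrix [] = 1 := rfl

lemma cfMatrix_cons (a : ℤ) (l : List ℤ) :
    cfMatrix (a :: l) = !![a, 1; 1, 0] * cfMatrix l := rfl

lemma cfMatrix_cons_eq_of (a : ℤ) (l : List ℤ) :
    cfMatrix (a :: l) = !![a * cfMatrix l 0 0 + cfMatrix l 1 0, a * cfMatrix l 0 1 + cfMatrix l 1 1;
      cfMatrix l 0 0, cfMatrix l 0 1] := by
  rw [cfMatrix_cons, eta_fin_two (cfMatrix l), mul_fin_two]
  simp

lemma det_cfMatrix (l : List ℤ) : (cfMatrix l).det = (-1) ^ l.length := by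
  induction l with
  | nil => simp
  | cons a l ih =>
    rw [cfMatrix_cons, det_mul, ih, det_fin_two_of, List.length_cons, pow_succ']
    ring

lemma cfMatrix_first_column_pos (l : List ℤ) (hl : ∀ y ∈ l, 1 ≤ y) :
    0 < cfMatrix l 0 0 ∧ 0 ≤ cfMatrix l 1 0 := by
  induction l with
  | nil => simp
  | cons a l ih =>
    rw [cfMatrix_cons_eq_of]
    obtain ⟨h₀, h₁⟩ := ih fun y hy => hl y (List.mem_cons_of_mem a hy)
    have ha : 1 ≤ a := hl a List.mem_cons_self
    simp only [of_apply, cons_val', cons_val_zero, cons_val_one, empty_val', cons_val_fin_one]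
    constructor <;> nlinarith

lemma isCoprime_of_isUnit_mul_sub_mul {R : Type*} [CommRing R] {a b c d : R}
    (h : IsUnit (a * d - b * c)) : IsCoprime a c := by
  obtain ⟨u, hu⟩ := h.exists_left_inv
  exact ⟨u * d, -(u * b), by linear_combination hu⟩

lemma Irrational.intCast_mul_add_ne_zero {t : ℝ} (ht : Irrational t) {p q : ℤ}
    (h : p ≠ 0 ∨ q ≠ 0) : (p : ℝ) * t + q ≠ 0 := by
  rcases eq_or_ne p 0 with rfl | hp
  · simpa using h
  · exact ((ht.intCast_mul hp).add_intCast q).ne_zero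

lemma cfValT_eq_div (l : List ℤ) {t : ℝ} (ht : Irrational t) :
    cfValT l t = (cfMatrix l 0 0 * t + cfMatrix l 0 1) / (cfMatrix l 1 0 * t + cfMatrix l 1 1) := by
  induction l with
  | nil => simp [cfValT]
  | cons a l ih =>
    have hrow : cfMatrix l 0 0 ≠ 0 ∨ cfMatrix l 0 1 ≠ 0 := by
      have hdet : (cfMatrix l).det ≠ 0 := by
        rw [det_cfMatrix]
        exact pow_ne_zero _ (by norm_num)
      by_contra! h
      simp [det_fin_two, h] at hdet
    rw [cfValT, ih, one_div_div, add_div' _ _ _ (ht.intCast_mul_add_ne_zero hrow),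
      cfMatrix_cons_eq_of]
    simp only [of_apply, cons_val', cons_val_zero, cons_val_one, empty_val', cons_val_fin_one]
    push_cast
    ring

lemma cfVal_cons_eq_div (a : ℤ) (l : List ℤ) (hl : ∀ y ∈ l, 1 ≤ y) :
    cfVal (a :: l) = cfMatrix (a :: l) 0 0 / cfMatrix (a :: l) 1 0 := by
  induction l generalizing a with
  | nil => simp [cfVal, cfMatrix_cons_eq_of]
  | cons b l ih =>
    have hpos : (0 : ℝ) < cfMatrix (b :: l) 0 0 := by
      exact_mod_cast (cfMatrix_first_column_pos _ hl).1
    rw [cfVal.eq_3 _ _ (List.cons_ne_nil _ _), ih b fun y hy => hl y (List.mem_cons_of_mem b hy),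
      one_div_div]
    conv_rhs => rw [cfMatrix_cons_eq_of a]
    simp only [of_apply, cons_val', cons_val_zero, cons_val_one, empty_val', cons_val_fin_one]
    push_cast
    field_simp

lemma eq_and_eq_of_mul_eq_mul {p q a c : ℤ} (hpq : IsCoprime p q) (hac : IsCoprime a c)
    (hq : 0 < q) (hc : 0 < c) (h : p * c = a * q) : p = a ∧ q = c := by
  have hqc : q ∣ c := hpq.symm.dvd_of_dvd_mul_left ⟨a, by linarith⟩
  have hcq : c ∣ q := hac.symm.dvd_of_dvd_mul_left ⟨p, by linarith⟩
  have : q = c := Int.dvd_antisymm hq.le hc.le hqc hcq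
  subst this
  exact ⟨mul_right_cancel₀ hq.ne' h, rfl⟩

lemma exists_eq_add_mul_of_mul_sub_mul_eq {a c b d b' d' : ℤ} (hac : IsCoprime a c) (hc : c ≠ 0)
    (h : a * d - b * c = a * d' - b' * c) : ∃ r, b = b' + a * r ∧ d = d' + c * r := by
  obtain ⟨r, hr⟩ : c ∣ d - d' := hac.symm.dvd_of_dvd_mul_left ⟨b - b', by linarith⟩
  refine ⟨r, mul_left_cancel₀ hc ?_, by linarith⟩
  linear_combination -h + a * hr

theorem homography_as_cf_general (x : ℝ) (hx : Irrational x) (a b c d : ℤ) (hc : 0 < c)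
    (l : List ℤ) (hl : l ≠ []) (htail : ∀ y ∈ l.tail, 1 ≤ y)
    (hval : cfVal l = (a : ℝ) / (c : ℝ))
    (hpar : a * d - b * c = (-1) ^ l.length) :
    ∃ r : ℤ, ((a : ℝ) * x + b) / ((c : ℝ) * x + d) = cfValT l (x + r) := by
  obtain ⟨a₀, l, rfl⟩ := List.exists_cons_of_ne_nil hl
  set M := cfMatrix (a₀ :: l) with hM
  have hdetM : M 0 0 * M 1 1 - M 0 1 * M 1 0 = a * d - b * c := by
    rw [← det_fin_two, det_cfMatrix, hpar]
  have hunit : IsUnit (a * d - b * c) := hpar ▸ isUnit_neg_one.pow _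
  have hac : IsCoprime a c := isCoprime_of_isUnit_mul_sub_mul hunit
  have hQ : 0 < M 1 0 := by
    simpa [M, cfMatrix_cons_eq_of] using (cfMatrix_first_column_pos l htail).1
  have hcross : M 0 0 * c = a * M 1 0 := by
    have := (div_eq_div_iff (by positivity) (by positivity)).mp
      ((cfVal_cons_eq_div a₀ l htail).symm.trans hval)
    exact_mod_cast this
  obtain ⟨hP, hQc⟩ := eq_and_eq_of_mul_eq_mul
    (isCoprime_of_isUnit_mul_sub_mul (hdetM ▸ hunit)) hac hQ hc hcross
  obtain ⟨r, hb, hd⟩ := exists_eq_add_mul_of_mul_sub_mul_eq hac hc.ne'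
    (hdetM.symm.trans (by rw [hP, hQc]))
  refine ⟨r, ?_⟩
  rw [cfValT_eq_div _ (hx.add_intCast r), ← hM, hP, hQc, hb, hd]
  push_cast
  ring

theorem homography_as_cf (x : ℝ) (hx : Irrational x) (a b c d : ℤ) (hc : 0 < c)
    (hdet : a * d - b * c = 1 ∨ a * d - b * c = -1)
    (l : List ℤ) (hl : l ≠ []) (htail : ∀ y ∈ l.tail, 1 ≤ y)
    (hval : cfVal l = (a : ℝ) / (c : ℝ))
    (hpar : a * d - b * c = (-1) ^ l.length) :
    ∃ r : ℤ, ((a : ℝ) * x + b) / ((c : ℝ) * x + d) = cfValT l (x + r) :=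
  homography_as_cf_general x hx a b c d hc l hl htail hval hpar
end

section
/- Every element of PGL₂(ℤ) can be written in the form Vᵉ T^{a₀} U T^{a₁} U ⋯ U T^{aₙ} where a₁, ..., a_{n-1} are strictly positive integers, a₀ and aₙ are arbitrary integers, and e ∈ {0,1} with e = 1 only allowed if n = 0. -/
abbrev GL2Z := Matrix.GeneralLinearGroup (Fin 2) ℤ
abbrev PGL2Z := GL2Z ⧸ Subgroup.center GL2Z

def Tgl : GL2Z := ⟨!![1, 1; 0, 1], !![1, -1; 0, 1], by decide, by decide⟩
def Ugl : GL2Z := ⟨!![0, 1; 1, 0], !![0, 1; 1, 0], by decide, by decide⟩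
def Vgl : GL2Z := ⟨!![-1, 0; 0, 1], !![-1, 0; 0, 1], by decide, by decide⟩

def Tp : PGL2Z := QuotientGroup.mk Tgl
def Up : PGL2Z := QuotientGroup.mk Ugl
def Vp : PGL2Z := QuotientGroup.mk Vgl

/-!
Choose a representative whose first column `(p, r)` has `r > 0`, or `r = 0 < p`. Writing
`M = T^q U M'` with `q = p / r` replaces the first column by `(r, p % r)`: this is the
Euclidean algorithm, and once `0 ≤ r < p` every quotient `q` is positive. It stops at the
column `(1, 0)`, that is at `T^b` or `V T^b`; a final `V` is absorbed by the relation
`U V = T⁻¹ U T U T⁻¹`, the preceding quotient being then at least `2`.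
-/

open QuotientGroup

lemma coe_Tgl_zpow (q : ℤ) : ((Tgl ^ q : GL2Z) : Matrix (Fin 2) (Fin 2) ℤ) = !![1, q; 0, 1] := by
  induction q using Int.induction_on with
  | zero => rw [zpow_zero]; decide
  | succ i ih =>
    rw [zpow_add_one, Units.val_mul, ih]
    simp [Tgl, add_comm]
  | pred i ih =>
    rw [zpow_sub_one, Units.val_mul, ih]
    change _ * !![1, -1; 0, 1] = _
    simp [sub_eq_add_neg, add_comm]

lemma Ugl_mul_self : Ugl * Ugl = 1 := by ext : 1; decide

lemma mk_neg (M : GL2Z) : (mk (-M) : PGL2Z) = mk M := by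
  rw [← neg_one_mul, mk_mul, (eq_one_iff _).mpr, one_mul]
  exact Subgroup.mem_center_iff.mpr fun g => by simp

lemma Up_mul_Vp : Up * Vp = Tp⁻¹ * Up * Tp * Up * Tp⁻¹ := by
  have : Ugl * Vgl = -(Tgl⁻¹ * Ugl * Tgl * Ugl * Tgl⁻¹) := by ext : 1; decide
  rw [Up, Vp, Tp, ← mk_mul, this, mk_neg]
  rfl

def word (n : ℕ) (a : ℕ → ℤ) : PGL2Z :=
  Tp ^ a 0 * ((List.range n).map fun i => Up * Tp ^ a (i + 1)).prod

lemma word_zero (a : ℕ → ℤ) : word 0 a = Tp ^ a 0 := by simp [word]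

lemma word_succ (n : ℕ) (q : ℤ) (a : ℕ → ℤ) :
    word (n + 1) (Stream'.cons q a) = Tp ^ q * Up * word n a := by
  simp only [word, List.range_succ_eq_map, List.map_cons, List.map_map, List.prod_cons, mul_assoc]
  rfl

def positiveWords : Set PGL2Z :=
  {g | ∃ n a, (∀ i < n, 0 < a i) ∧ g = word n a}

def normalForms : Set PGL2Z :=
  {g | ∃ (e n : ℕ) (a : ℕ → ℤ), (e = 0 ∨ e = 1 ∧ n = 0) ∧ (∀ i, 1 ≤ i → i < n → 0 < a i) ∧
    g = Vp ^ e * word n a}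

lemma zpow_mem_positiveWords (b : ℤ) : Tp ^ b ∈ positiveWords :=
  ⟨0, fun _ => b, by simp, (word_zero fun _ => b).symm⟩

lemma zpow_mul_Up_mul_mem_positiveWords {q : ℤ} {g : PGL2Z} (hq : 0 < q)
    (hg : g ∈ positiveWords) : Tp ^ q * Up * g ∈ positiveWords := by
  obtain ⟨n, a, ha, rfl⟩ := hg
  refine ⟨n + 1, Stream'.cons q a, fun i hi => ?_, (word_succ n q a).symm⟩
  cases i with
  | zero => exact hq
  | succ i => exact ha i (by omega)

lemma exists_mem_positiveWords_zpow_mul_Up_mul_Vp_mul (q b : ℤ) :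
    ∃ g ∈ positiveWords, Tp ^ q * Up * (Vp * Tp ^ b) = Tp ^ (q - 1) * Up * g := by
  refine ⟨Tp * Up * Tp ^ (b - 1),
    by simpa using zpow_mul_Up_mul_mem_positiveWords one_pos (zpow_mem_positiveWords (b - 1)), ?_⟩
  rw [show Tp ^ q * Up * (Vp * Tp ^ b) = Tp ^ q * (Up * Vp) * Tp ^ b by group, Up_mul_Vp]
  group

lemma positiveWords_subset_normalForms : positiveWords ⊆ normalForms := by
  rintro g ⟨n, a, ha, rfl⟩
  exact ⟨0, n, a, Or.inl rfl, fun i _ hi => ha i hi, (one_mul _).symm⟩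

lemma Vp_mul_zpow_mem_normalForms (b : ℤ) : Vp * Tp ^ b ∈ normalForms :=
  ⟨1, 0, fun _ => b, Or.inr ⟨rfl, rfl⟩, by simp, by rw [pow_one, word_zero]⟩

lemma zpow_mul_Up_mul_mem_normalForms (q : ℤ) {g : PGL2Z} (hg : g ∈ positiveWords) :
    Tp ^ q * Up * g ∈ normalForms := by
  obtain ⟨n, a, ha, rfl⟩ := hg
  refine ⟨0, n + 1, Stream'.cons q a, Or.inl rfl, fun i hi hin => ?_, ?_⟩
  · obtain ⟨i, rfl⟩ := Nat.exists_eq_add_of_le' hi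
    exact ha i (by omega)
  · rw [pow_zero, one_mul, word_succ]

def euclidStep (M : GL2Z) : GL2Z :=
  Ugl * Tgl ^ (-(M 0 0 / M 1 0)) * M

lemma mk_eq_zpow_mul_Up_mul_euclidStep (M : GL2Z) :
    (mk M : PGL2Z) = Tp ^ (M 0 0 / M 1 0) * Up * mk (euclidStep M) := by
  have : M = Tgl ^ (M 0 0 / M 1 0) * Ugl * euclidStep M := by
    rw [euclidStep, mul_assoc, ← mul_assoc Ugl, ← mul_assoc Ugl, Ugl_mul_self, one_mul,
      ← mul_assoc, zpow_neg, mul_inv_cancel, one_mul]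
  conv_lhs => rw [this]
  rfl

lemma euclidStep_apply_zero_zero (M : GL2Z) : euclidStep M 0 0 = M 1 0 := by
  rw [euclidStep, Units.val_mul, Units.val_mul, coe_Tgl_zpow]
  simp [Ugl, Matrix.mul_apply, Fin.sum_univ_two]

lemma euclidStep_apply_one_zero (M : GL2Z) : euclidStep M 1 0 = M 0 0 % M 1 0 := by
  rw [euclidStep, Units.val_mul, Units.val_mul, coe_Tgl_zpow, Int.emod_def]
  simp [Ugl, Matrix.mul_apply, Fin.sum_univ_two, sub_eq_add_neg, mul_comm]

lemma euclidStep_apply_one_zero_mem_Ico (M : GL2Z) (h : 0 < M 1 0) :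
    euclidStep M 1 0 ∈ Set.Ico 0 (euclidStep M 0 0) := by
  rw [euclidStep_apply_one_zero, euclidStep_apply_zero_zero]
  exact ⟨Int.emod_nonneg _ h.ne', Int.emod_lt_of_pos _ h⟩

lemma apply_zero_zero_eq_one_and_mk_eq_of_apply_one_zero_eq_zero (M : GL2Z) (h10 : M 1 0 = 0)
    (h00 : 0 < M 0 0) : M 0 0 = 1 ∧ (mk M = Tp ^ M 0 1 ∨ mk M = Vp * Tp ^ M 0 1) := by
  have hdet : IsUnit (M 0 0 * M 1 1) := by
    simpa [Matrix.det_fin_two, h10] using (Matrix.GeneralLinearGroup.det M).isUnit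
  have h00' : M 0 0 = 1 := by
    rcases Int.isUnit_iff.mp (isUnit_of_mul_isUnit_left hdet) with h | h <;> omega
  have hM : (M : Matrix (Fin 2) (Fin 2) ℤ) = !![1, M 0 1; 0, M 1 1] := by
    rw [← h00', ← h10]; exact Matrix.eta_fin_two _
  refine ⟨h00', ?_⟩
  generalize M 0 1 = b at hM ⊢
  rcases Int.isUnit_iff.mp (isUnit_of_mul_isUnit_right hdet) with h11 | h11
  · left
    have : M = Tgl ^ b := by ext : 1; rw [hM, coe_Tgl_zpow, h11]
    rw [this, mk_zpow]; rfl
  · right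
    have : M = -(Vgl * Tgl ^ b) := by
      ext : 1
      rw [hM, Units.val_neg, Units.val_mul, coe_Tgl_zpow, h11]
      simp [Vgl]
    rw [this, mk_neg, mk_mul, mk_zpow]; rfl

lemma exists_mk_eq_and_first_column_pos (M : GL2Z) :
    ∃ N : GL2Z, (mk N : PGL2Z) = mk M ∧ (0 < N 1 0 ∨ N 1 0 = 0 ∧ 0 < N 0 0) := by
  have hcol : M 0 0 ≠ 0 ∨ M 1 0 ≠ 0 := by
    by_contra! h
    apply Matrix.GeneralLinearGroup.det_ne_zero M
    simp [Matrix.det_fin_two, h]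
  have hneg : ∀ i j, (-M) i j = -M i j := fun _ _ => rfl
  by_cases h : 0 < M 1 0 ∨ M 1 0 = 0 ∧ 0 < M 0 0
  · exact ⟨M, rfl, h⟩
  · exact ⟨-M, mk_neg M, by rw [hneg, hneg]; omega⟩

theorem mk_mem_positiveWords_or_eq_Vp_mul (M : GL2Z) (h0 : 0 ≤ M 1 0) (h : M 1 0 < M 0 0) :
    mk M ∈ positiveWords ∨ M 0 0 = 1 ∧ ∃ b : ℤ, mk M = Vp * Tp ^ b := by
  rcases h0.eq_or_lt with h0 | h0
  · obtain ⟨h1, hT | hV⟩ :=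
      apply_zero_zero_eq_one_and_mk_eq_of_apply_one_zero_eq_zero M h0.symm (h0 ▸ h)
    · exact Or.inl (hT ▸ zpow_mem_positiveWords _)
    · exact Or.inr ⟨h1, M 0 1, hV⟩
  · have hq : 1 ≤ M 0 0 / M 1 0 := by rw [Int.le_ediv_iff_mul_le h0, one_mul]; exact h.le
    have hM' := euclidStep_apply_one_zero_mem_Ico M h0
    rw [mk_eq_zpow_mul_Up_mul_euclidStep]
    rcases mk_mem_positiveWords_or_eq_Vp_mul (euclidStep M) hM'.1 hM'.2 with hg | ⟨h1, b, hb⟩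
    · exact Or.inl (zpow_mul_Up_mul_mem_positiveWords (by omega) hg)
    · have hr : M 1 0 = 1 := euclidStep_apply_zero_zero M ▸ h1
      have hq2 : 2 ≤ M 0 0 / M 1 0 := by rw [Int.le_ediv_iff_mul_le h0]; omega
      obtain ⟨g, hg, hgq⟩ := exists_mem_positiveWords_zpow_mul_Up_mul_Vp_mul (M 0 0 / M 1 0) b
      rw [hb, hgq]
      exact Or.inl (zpow_mul_Up_mul_mem_positiveWords (by omega) hg)
termination_by (M 1 0).toNat
decreasing_by
  have := euclidStep_apply_one_zero_mem_Ico M h0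
  rw [euclidStep_apply_zero_zero, Set.mem_Ico] at this
  omega

theorem mk_mem_normalForms (M : GL2Z) : (mk M : PGL2Z) ∈ normalForms := by
  obtain ⟨N, hN, h10 | ⟨h10, h00⟩⟩ := exists_mk_eq_and_first_column_pos M <;> rw [← hN]
  · have hN' := euclidStep_apply_one_zero_mem_Ico N h10
    rw [mk_eq_zpow_mul_Up_mul_euclidStep]
    rcases mk_mem_positiveWords_or_eq_Vp_mul (euclidStep N) hN'.1 hN'.2 with hg | ⟨-, b, hb⟩
    · exact zpow_mul_Up_mul_mem_normalForms _ hg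
    · obtain ⟨g, hg, hgq⟩ := exists_mem_positiveWords_zpow_mul_Up_mul_Vp_mul (N 0 0 / N 1 0) b
      rw [hb, hgq]
      exact zpow_mul_Up_mul_mem_normalForms _ hg
  · rcases mk_mem_positiveWords_or_eq_Vp_mul N h10.ge (h10 ▸ h00) with hg | ⟨-, b, hb⟩
    · exact positiveWords_subset_normalForms hg
    · exact hb ▸ Vp_mul_zpow_mem_normalForms b

theorem pgl2z_normal_form (g : PGL2Z) :
    ∃ (e : ℕ) (n : ℕ) (a : ℕ → ℤ),
      (e = 0 ∨ (e = 1 ∧ n = 0)) ∧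
      (∀ i : ℕ, 1 ≤ i → i < n → 0 < a i) ∧
      g = Vp ^ e * Tp ^ (a 0) * ((List.range n).map (fun i => Up * Tp ^ (a (i + 1)))).prod := by
  induction g using QuotientGroup.induction_on with
  | H M =>
    obtain ⟨e, n, a, he, ha, hM⟩ := mk_mem_normalForms M
    exact ⟨e, n, a, he, ha, by rw [hM, word, mul_assoc]⟩
end
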